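/- arXiv:2002.09719 — 5 statements merged into one kernel-verified Lean document; each statement's English description precedes it below -/
import Mathlib

section
/- The greedy schedule t_1 = 0, t_i = t_{i-1} + T_{i-1}, c_1 = t_1 + T_1, c_i = max(c_{i-1} + C_{i-1}, t_i + T_i) satisfies all scheduling constraints and achieves c_N + C_N = max over k ∈ {1,...,N} of (∑_{i=1}^k T_i + ∑_{j=k}^N C_j); hence the feasibility bound on the deadline T is tight. -/
open Finset

theorem stmt1 (N : ℕ) (hN : 1 ≤ N) (T C t c : ℕ → ℝ)
    (hT : ∀ k, 1 ≤ k → k ≤ N → 0 < T k)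
    (hC : ∀ k, 1 ≤ k → k ≤ N → 0 < C k)
    (ht1 : t 1 = 0)
    (htrec : ∀ k, 2 ≤ k → k ≤ N → t k = t (k-1) + T (k-1))
    (hc1 : c 1 = t 1 + T 1)
    (hcrec : ∀ k, 2 ≤ k → k ≤ N → c k = max (c (k-1) + C (k-1)) (t k + T k)) :
    0 ≤ t 1 ∧
    (∀ k, 2 ≤ k → k ≤ N → t (k-1) + T (k-1) ≤ t k) ∧
    (∀ k, 2 ≤ k → k ≤ N → c (k-1) + C (k-1) ≤ c k) ∧
    (∀ k, 1 ≤ k → k ≤ N → t k + T k ≤ c k) ∧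
    c N + C N = (Finset.Icc 1 N).sup' (Finset.nonempty_Icc.mpr hN)
      (fun k => (∑ i ∈ Finset.Icc 1 k, T i) + ∑ j ∈ Finset.Icc k N, C j) := by
  have hicc : ∀ n : ℕ, 1 ≤ n → Finset.Icc 1 (n+1) = insert (n+1) (Finset.Icc 1 n) := by
    intro n hn
    ext x
    simp only [Finset.mem_Icc, Finset.mem_insert]
    omega
  -- t k + T k = partial sum of T
  have hts : ∀ k, 1 ≤ k → k ≤ N → t k + T k = ∑ i ∈ Finset.Icc 1 k, T i := by
    intro k hk
    induction k, hk using Nat.le_induction with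
    | base => intro _; simp [ht1]
    | succ n hn ih =>
      intro hnN
      have h2 : 2 ≤ n + 1 := by omega
      have ht : t (n+1) = t n + T n := by
        have := htrec (n+1) h2 hnN
        simpa using this
      rw [hicc n hn, Finset.sum_insert (by simp), ht, ih (by omega)]
      ring
  refine ⟨le_of_eq ht1.symm, ?_, ?_, ?_, ?_⟩
  · intro k h2 hkN
    exact le_of_eq (htrec k h2 hkN).symm
  · intro k h2 hkN
    rw [hcrec k h2 hkN]
    exact le_max_left _ _
  · intro k h1 hkN
    rcases eq_or_lt_of_le h1 with h | h
    · rw [← h, hc1]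
    · rw [hcrec k (by omega) hkN]
      exact le_max_right _ _
  · -- main equality, by induction
    have main : ∀ n, ∀ hn : 1 ≤ n, n ≤ N →
        c n + C n = (Finset.Icc 1 n).sup' (Finset.nonempty_Icc.mpr hn)
          (fun k => (∑ i ∈ Finset.Icc 1 k, T i) + ∑ j ∈ Finset.Icc k n, C j) := by
      intro n hn
      induction n, hn using Nat.le_induction with
      | base =>
        intro _
        simp [hc1, ht1]
      | succ n hn ih =>
        intro hnN
        have hne : (Finset.Icc 1 n).Nonempty := Finset.nonempty_Icc.mpr hn
        have h2 : 2 ≤ n + 1 := by omega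
        have hc : c (n+1) = max (c n + C n) (t (n+1) + T (n+1)) := by
          have := hcrec (n+1) h2 hnN
          simpa using this
        set f : ℕ → ℝ := fun k => (∑ i ∈ Finset.Icc 1 k, T i) + ∑ j ∈ Finset.Icc k (n+1), C j with hf
        have hstep : (Finset.Icc 1 (n+1)).sup' (Finset.nonempty_Icc.mpr (by omega)) f
            = f (n+1) ⊔ (Finset.Icc 1 n).sup' hne f := by
          rw [Finset.sup'_congr (Finset.nonempty_Icc.mpr (by omega)) (hicc n hn)
            (fun x _ => rfl)]
          exact Finset.sup'_insert hne f
        have hsum : ∀ k, k ∈ Finset.Icc 1 n →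
            f k = ((∑ i ∈ Finset.Icc 1 k, T i) + ∑ j ∈ Finset.Icc k n, C j) + C (n+1) := by
          intro k hk
          simp only [Finset.mem_Icc] at hk
          have : Finset.Icc k (n+1) = insert (n+1) (Finset.Icc k n) := by
            ext x; simp only [Finset.mem_Icc, Finset.mem_insert]; omega
          show (∑ i ∈ Finset.Icc 1 k, T i) + ∑ j ∈ Finset.Icc k (n+1), C j = _
          rw [this, Finset.sum_insert (by simp)]
          ring
        have hdist : (Finset.Icc 1 n).sup' hne f
            = ((Finset.Icc 1 n).sup' hne
              (fun k => (∑ i ∈ Finset.Icc 1 k, T i) + ∑ j ∈ Finset.Icc k n, C j)) + C (n+1) := by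
          rw [Finset.sup'_congr hne rfl hsum]
          rw [Finset.comp_sup'_eq_sup'_comp hne (fun x => x + C (n+1))
            (fun x y => (max_add_add_right x y _).symm)]
          rfl
        rw [hstep, hdist, ← ih (by omega)]
        have hfn : f (n+1) = (t (n+1) + T (n+1)) + C (n+1) := by
          simp only [hf, hts (n+1) (by omega) hnN]
          simp
        rw [hfn, hc, max_add_add_right, max_comm]
    exact main N hN (le_refl N)
end

section
/- There exists a feasible schedule (t_1,...,t_N, c_1,...,c_N) satisfying all scheduling constraints together with the no-wait condition c_k = t_k + T_k for all k, if and only if T ≥ T_1 + ∑_{k=1}^{N−1} max(C_k, T_{k+1}) + C_N. -/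
open Finset

/-- Feasibility of a schedule `(t, c)` for deadline `Tdl`. -/
def Feasible (N : ℕ) (T C : ℕ → ℝ) (Tdl : ℝ) (t c : ℕ → ℝ) : Prop :=
  0 ≤ t 1 ∧
  (∀ k, 2 ≤ k → k ≤ N → t (k-1) + T (k-1) ≤ t k) ∧
  (∀ k, 2 ≤ k → k ≤ N → c (k-1) + C (k-1) ≤ c k) ∧
  (∀ k, 1 ≤ k → k ≤ N → t k + T k ≤ c k) ∧
  c N + C N ≤ Tdl

theorem stmt6 (N : ℕ) (hN : 1 ≤ N) (T C : ℕ → ℝ) (Tdl : ℝ)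
    (hT : ∀ k, 1 ≤ k → k ≤ N → 0 < T k)
    (hC : ∀ k, 1 ≤ k → k ≤ N → 0 < C k) :
    (∃ t c : ℕ → ℝ, Feasible N T C Tdl t c ∧
        ∀ k, 1 ≤ k → k ≤ N → c k = t k + T k) ↔
    T 1 + (∑ k ∈ Finset.Icc 1 (N-1), max (C k) (T (k+1))) + C N ≤ Tdl := by
  constructor
  · rintro ⟨t, c, ⟨ht1, htt, hcc, htc, hend⟩, hnw⟩
    have key : ∀ k, 1 ≤ k → k ≤ N →
        T 1 + ∑ j ∈ Finset.Icc 1 (k-1), max (C j) (T (j+1)) ≤ c k := by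
      intro k
      induction k with
      | zero => omega
      | succ n ih =>
        intro _ hn
        rcases Nat.eq_zero_or_pos n with rfl | hn1
        · simp only [Nat.add_sub_cancel, Finset.Icc_self]
          simp
          have := hnw 1 le_rfl hN
          have := ht1
          linarith [hnw 1 le_rfl hN]
        · have ihn := ih hn1 (by omega)
          obtain ⟨m, rfl⟩ : ∃ m, n = m + 1 := ⟨n - 1, by omega⟩
          have hsum : ∑ j ∈ Finset.Icc 1 (m+1), max (C j) (T (j+1)) =
              (∑ j ∈ Finset.Icc 1 m, max (C j) (T (j+1))) + max (C (m+1)) (T (m+2)) :=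
            Finset.sum_Icc_succ_top (by omega) _
          simp only [Nat.add_sub_cancel] at ihn ⊢
          rw [hsum]
          -- c (m+2) ≥ c (m+1) + max (C (m+1)) (T (m+2))
          have h1 : c (m+1) + C (m+1) ≤ c (m+2) := by
            have := hcc (m+2) (by omega) hn
            simpa using this
          have h2 : c (m+1) + T (m+2) ≤ c (m+2) := by
            have hw1 := hnw (m+1) (by omega) (by omega)
            have hw2 := hnw (m+2) (by omega) hn
            have := htt (m+2) (by omega) hn
            simp only [show m+2-1 = m+1 from rfl] at this
            linarith
          have : c (m+1) + max (C (m+1)) (T (m+2)) ≤ c (m+2) := by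
            rcases max_cases (C (m+1)) (T (m+2)) with ⟨h, _⟩ | ⟨h, _⟩ <;> rw [h] <;> linarith
          linarith
    have := key N hN le_rfl
    linarith
  · intro hsum
    set c : ℕ → ℝ := fun k => T 1 + ∑ j ∈ Finset.Icc 1 (k-1), max (C j) (T (j+1)) with hc
    refine ⟨fun k => c k - T k, c, ⟨?_, ?_, ?_, ?_, ?_⟩, fun k _ _ => by ring⟩
    · simp [hc]
    · intro k h2 hk
      obtain ⟨m, rfl⟩ : ∃ m, k = m + 2 := ⟨k - 2, by omega⟩
      have hsum2 : ∑ j ∈ Finset.Icc 1 (m+1), max (C j) (T (j+1)) =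
          (∑ j ∈ Finset.Icc 1 m, max (C j) (T (j+1))) + max (C (m+1)) (T (m+2)) :=
        Finset.sum_Icc_succ_top (by omega) _
      simp only [hc, show m+2-1 = m+1 from rfl, show m+1-1 = m from rfl, hsum2]
      have := le_max_right (C (m+1)) (T (m+2))
      linarith
    · intro k h2 hk
      obtain ⟨m, rfl⟩ : ∃ m, k = m + 2 := ⟨k - 2, by omega⟩
      have hsum2 : ∑ j ∈ Finset.Icc 1 (m+1), max (C j) (T (j+1)) =
          (∑ j ∈ Finset.Icc 1 m, max (C j) (T (j+1))) + max (C (m+1)) (T (m+2)) :=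
        Finset.sum_Icc_succ_top (by omega) _
      simp only [hc, show m+2-1 = m+1 from rfl, show m+1-1 = m from rfl, hsum2]
      linarith [le_max_left (C (m+1)) (T (m+2))]
    · intro k _ _; simp
    · exact hsum
end

section
/- The explicit schedule t_1 = 0, t_k = t_{k-1} + T_{k-1} + max(0, C_{k-1} − T_k) for 2 ≤ k ≤ N, c_k = t_k + T_k, satisfies c_N + C_N = T_1 + ∑_{k=1}^{N−1} max(C_k, T_{k+1}) + C_N; consequently it is a feasible no-wait schedule whenever T ≥ T_1 + ∑_{k=1}^{N−1} max(C_k, T_{k+1}) + C_N. -/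
open Finset

theorem stmt7 (N : ℕ) (hN : 1 ≤ N) (T C t c : ℕ → ℝ) (Tdl : ℝ)
    (hT : ∀ k, 1 ≤ k → k ≤ N → 0 < T k)
    (hC : ∀ k, 1 ≤ k → k ≤ N → 0 < C k)
    (ht1 : t 1 = 0)
    (htrec : ∀ k, 2 ≤ k → k ≤ N → t k = t (k-1) + T (k-1) + max 0 (C (k-1) - T k))
    (hc : ∀ k, 1 ≤ k → k ≤ N → c k = t k + T k) :
    c N + C N = T 1 + (∑ k ∈ Finset.Icc 1 (N-1), max (C k) (T (k+1))) + C N ∧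
    (T 1 + (∑ k ∈ Finset.Icc 1 (N-1), max (C k) (T (k+1))) + C N ≤ Tdl →
      Feasible N T C Tdl t c) := by
  have key : ∀ n : ℕ, n + 1 ≤ N →
      t (n+1) + T (n+1) = T 1 + ∑ k ∈ Finset.Icc 1 n, max (C k) (T (k+1)) := by
    intro n
    induction n with
    | zero => intro _; simp [ht1]
    | succ m ih =>
      intro h
      have h2 : 2 ≤ m + 2 := by omega
      have hrec := htrec (m+2) h2 h
      have hm1 : m + 2 - 1 = m + 1 := rfl
      rw [hm1] at hrec
      have hsum := Finset.sum_Icc_succ_top (by omega : 1 ≤ m + 1)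
        (fun k => max (C k) (T (k+1)))
      have := ih (by omega)
      have hmax : max 0 (C (m+1) - T (m+2)) + T (m+2) = max (C (m+1)) (T (m+2)) := by
        rcases le_total (C (m+1)) (T (m+2)) with hle | hle
        · rw [max_eq_left (sub_nonpos.mpr hle), max_eq_right hle]; ring
        · rw [max_eq_right (by linarith : (0:ℝ) ≤ C (m+1) - T (m+2)), max_eq_left hle]; ring
      rw [hsum]
      show t (m+2) + T (m+2) = _
      rw [hrec]
      linarith
  have hNeq : N - 1 + 1 = N := Nat.succ_pred_eq_of_pos hN
  have hkeyN : t N + T N = T 1 + ∑ k ∈ Finset.Icc 1 (N-1), max (C k) (T (k+1)) := by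
    have := key (N-1) (by omega)
    rwa [hNeq] at this
  have hcN := hc N hN le_rfl
  constructor
  · rw [hcN, hkeyN]
  · intro hTdl
    refine ⟨by rw [ht1], ?_, ?_, ?_, ?_⟩
    · intro k hk2 hkN
      rw [htrec k hk2 hkN]
      have : (0:ℝ) ≤ max 0 (C (k-1) - T k) := le_max_left _ _
      linarith
    · intro k hk2 hkN
      rw [hc k (by omega) hkN, hc (k-1) (by omega) (by omega), htrec k hk2 hkN]
      have : C (k-1) - T k ≤ max 0 (C (k-1) - T k) := le_max_right _ _
      linarith
    · intro k hk1 hkN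
      rw [hc k hk1 hkN]
    · rw [hcN, hkeyN]; linarith
end

section
/- Define t_k* = (k/(N+1))·B − ∑_{i=1}^k (T_i + C_i) − Δ_0 and c_k* = (k/(N+1))·B − ∑_{i=1}^{k-1} (T_i + C_i) − C_k − Δ_0, where B = Δ_0 + ∑_{k=1}^N (T_k + C_k) + T. Then c_k* = t_k* + T_k for all k, t_k* − t_{k-1}* + T_k + C_k = B/(N+1) for all k (with t_0* = −Δ_0), and T − t_N* = B/(N+1); i.e., this schedule makes all N+1 peak ages equal to B/(N+1). -/
open Finset

theorem stmt13 (N : ℕ) (hN : 1 ≤ N) (T C t c : ℕ → ℝ) (Δ0 Tdl B : ℝ)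
    (hB : B = Δ0 + (∑ k ∈ Finset.Icc 1 N, (T k + C k)) + Tdl)
    (ht : ∀ k, k ≤ N →
      t k = ((k:ℝ)/((N:ℝ)+1)) * B - (∑ i ∈ Finset.Icc 1 k, (T i + C i)) - Δ0)
    (hc : ∀ k, 1 ≤ k → k ≤ N →
      c k = ((k:ℝ)/((N:ℝ)+1)) * B - (∑ i ∈ Finset.Icc 1 (k-1), (T i + C i))
              - C k - Δ0) :
    (∀ k, 1 ≤ k → k ≤ N → c k = t k + T k) ∧
    (∀ k, 1 ≤ k → k ≤ N → t k - t (k-1) + T k + C k = B / ((N:ℝ)+1)) ∧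
    Tdl - t N = B / ((N:ℝ)+1) := by
  have hNe : (N:ℝ) + 1 ≠ 0 := by positivity
  have hsum : ∀ k, 1 ≤ k → (∑ i ∈ Finset.Icc 1 k, (T i + C i))
      = (∑ i ∈ Finset.Icc 1 (k-1), (T i + C i)) + (T k + C k) := by
    intro k hk
    obtain ⟨m, rfl⟩ := Nat.exists_eq_add_of_le hk
    rw [Nat.add_sub_cancel_left, add_comm 1 m, Finset.sum_Icc_succ_top (by omega)]
  have hcast : ∀ k : ℕ, 1 ≤ k → ((k - 1 : ℕ) : ℝ) = (k : ℝ) - 1 := by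
    intro k hk
    rw [Nat.cast_sub hk, Nat.cast_one]
  refine ⟨?_, ?_, ?_⟩
  · intro k hk1 hkN
    rw [hc k hk1 hkN, ht k hkN, hsum k hk1]
    ring
  · intro k hk1 hkN
    rw [ht k hkN, ht (k-1) (by omega), hsum k hk1, hcast k hk1]
    field_simp
    ring
  · rw [ht N le_rfl, hB]
    field_simp
    ring
end

section
/- If T ≥ (N+1)·max_{1 ≤ k ≤ N+1} A_k − ∑_{k=1}^N (T_k + C_k) − Δ_0 (with A_k as defined), then the closed-form schedule t_k* = (k/(N+1))B − ∑_{i=1}^k (T_i + C_i) − Δ_0, c_k* = t_k* + T_k satisfies all the feasibility constraints: t_1* ≥ 0, t_k* ≥ t_{k-1}* + T_{k-1}, c_k* ≥ c_{k-1}* + C_{k-1}, c_k* ≥ t_k* + T_k, and c_N* + C_N ≤ T. -/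
open Finset

theorem stmt14 (N : ℕ) (hN : 1 ≤ N) (T C A t c : ℕ → ℝ) (Δ0 Tdl B : ℝ)
    (hΔ0 : 0 < Δ0)
    (hT : ∀ k, 1 ≤ k → k ≤ N → 0 < T k)
    (hC : ∀ k, 1 ≤ k → k ≤ N → 0 < C k)
    (hA1 : A 1 = Δ0 + T 1 + C 1)
    (hAk : ∀ k, 2 ≤ k → k ≤ N → A k = T (k-1) + max (C (k-1)) (T k) + C k)
    (hAN1 : A (N+1) = T N + C N)
    (hB : B = Δ0 + (∑ k ∈ Finset.Icc 1 N, (T k + C k)) + Tdl)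
    (hTdl : ((N:ℝ)+1) * ((Finset.Icc 1 (N+1)).sup'
          (Finset.nonempty_Icc.mpr (by omega)) A)
        - (∑ k ∈ Finset.Icc 1 N, (T k + C k)) - Δ0 ≤ Tdl)
    (ht : ∀ k, 1 ≤ k → k ≤ N →
      t k = ((k:ℝ)/((N:ℝ)+1)) * B - (∑ i ∈ Finset.Icc 1 k, (T i + C i)) - Δ0)
    (hc : ∀ k, 1 ≤ k → k ≤ N → c k = t k + T k) :
    0 ≤ t 1 ∧
    (∀ k, 2 ≤ k → k ≤ N → t (k-1) + T (k-1) ≤ t k) ∧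
    (∀ k, 2 ≤ k → k ≤ N → c (k-1) + C (k-1) ≤ c k) ∧
    (∀ k, 1 ≤ k → k ≤ N → t k + T k ≤ c k) ∧
    c N + C N ≤ Tdl := by
  have hN1 : (0:ℝ) < (N:ℝ)+1 := by positivity
  have hMB : ((N:ℝ)+1) * ((Finset.Icc 1 (N+1)).sup'
      (Finset.nonempty_Icc.mpr (by omega)) A) ≤ B := by rw [hB]; linarith
  have hAB : ∀ k, 1 ≤ k → k ≤ N+1 → A k ≤ B / ((N:ℝ)+1) := by
    intro k h1 h2
    rw [le_div_iff₀ hN1]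
    have h3 : A k ≤ (Finset.Icc 1 (N+1)).sup'
        (Finset.nonempty_Icc.mpr (by omega)) A :=
      Finset.le_sup' A (Finset.mem_Icc.mpr ⟨h1, h2⟩)
    nlinarith
  have hdiff : ∀ m : ℕ, 1 ≤ m → m ≤ N - 1 →
      t (m+1) - t m = B / ((N:ℝ)+1) - (T (m+1) + C (m+1)) := by
    intro m h1 h2
    rw [ht (m+1) (by omega) (by omega), ht m h1 (by omega),
      Finset.sum_Icc_succ_top (by omega : 1 ≤ m + 1)]
    push_cast
    field_simp
    ring
  refine ⟨?_, ?_, ?_, ?_, ?_⟩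
  · rw [ht 1 le_rfl hN]
    have h1 := hAB 1 le_rfl (by omega)
    rw [hA1] at h1
    rw [show Finset.Icc 1 1 = {1} from rfl, Finset.sum_singleton]
    have : ((1:ℕ):ℝ)/((N:ℝ)+1) * B = B / ((N:ℝ)+1) := by push_cast; ring
    rw [this]
    linarith
  · intro k h2 hk
    obtain ⟨m, rfl⟩ : ∃ m, k = m+1 := ⟨k-1, by omega⟩
    simp only [Nat.add_sub_cancel]
    have hd := hdiff m (by omega) (by omega)
    have hAB' := hAB (m+1) (by omega) (by omega)
    rw [hAk (m+1) (by omega) hk] at hAB'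
    simp only [Nat.add_sub_cancel] at hAB'
    have := le_max_right (C m) (T (m+1))
    linarith
  · intro k h2 hk
    obtain ⟨m, rfl⟩ : ∃ m, k = m+1 := ⟨k-1, by omega⟩
    simp only [Nat.add_sub_cancel]
    rw [hc (m+1) (by omega) hk, hc m (by omega) (by omega)]
    have hd := hdiff m (by omega) (by omega)
    have hAB' := hAB (m+1) (by omega) (by omega)
    rw [hAk (m+1) (by omega) hk] at hAB'
    simp only [Nat.add_sub_cancel] at hAB'
    have := le_max_left (C m) (T (m+1))
    linarith
  · intro k h1 h2
    rw [hc k h1 h2]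
  · rw [hc N hN le_rfl, ht N hN le_rfl]
    have hAB' := hAB (N+1) (by omega) le_rfl
    rw [hAN1] at hAB'
    have hkey : ((N:ℝ))/((N:ℝ)+1) * B + B / ((N:ℝ)+1) = B := by
      field_simp
    linarith [hB]
end
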